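/- Let p_α, p_β, p_γ be real numbers with p_ε = 1 − p_α − p_β − p_γ, and suppose the three quantities x₁ = 1 − 2(p_α + p_γ), x₂ = 1 − 2(p_β + p_γ), x₃ = 1 − 2(p_α + p_β) are all positive. Define q_α = (1/4)·ln(x₂/(x₁x₃)), q_β = (1/4)·ln(x₁/(x₂x₃)), q_γ = (1/4)·ln(x₃/(x₁x₂)), K = q_α + q_β + q_γ, and let R be the matrix of K3ST form with parameters (−K, q_α, q_β, q_γ). Then exp(R) equals the K3ST-form matrix with parameters (p_ε, p_α, p_β, p_γ). -/

import Mathlib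

/-- A 4×4 real matrix of K3ST form with parameters `(a, b, c, d)`. -/
def K3ST (a b c d : ℝ) : Matrix (Fin 4) (Fin 4) ℝ :=
  !![a, b, c, d;
     b, a, d, c;
     c, d, a, b;
     d, c, b, a]

/-!
The K3ST matrices are simultaneously diagonalised by the Hadamard matrix `H` (the character table
of the Klein four-group): `K3ST a b c d = H · diag(a+b+c+d, a+b-c-d, a-b+c-d, a-b-c+d) · H⁻¹`.
Hence `exp` acts on these eigenvalues one by one, and the theorem reduces to four scalar
identities: `R` has eigenvalues `0, ln x₂, ln x₁, ln x₃`, and the target matrix has eigenvalues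
`1, x₂, x₁, x₃`.
-/

open Matrix

def hadamard4 : Matrix (Fin 4) (Fin 4) ℝ :=
  !![1, 1, 1, 1;
     1, 1, -1, -1;
     1, -1, 1, -1;
     1, -1, -1, 1]

lemma hadamard4_mul_hadamard4 : hadamard4 * hadamard4 = (4 : ℝ) • 1 := by
  ext i j
  fin_cases i <;> fin_cases j <;>
    simp [hadamard4, mul_apply, Fin.sum_univ_four, one_apply] <;> norm_num

lemma hadamard4_mul_inv_smul_hadamard4 : hadamard4 * ((4 : ℝ)⁻¹ • hadamard4) = 1 := by
  rw [mul_smul_comm, hadamard4_mul_hadamard4, smul_smul, inv_mul_cancel₀ four_ne_zero, one_smul]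

lemma inv_hadamard4 : hadamard4⁻¹ = (4 : ℝ)⁻¹ • hadamard4 :=
  inv_eq_right_inv hadamard4_mul_inv_smul_hadamard4

lemma isUnit_hadamard4 : IsUnit hadamard4 :=
  .of_mul_eq_one _ hadamard4_mul_inv_smul_hadamard4

lemma K3ST_eq_hadamard4_conj (a b c d : ℝ) :
    K3ST a b c d = hadamard4 * diagonal ![a + b + c + d, a + b - c - d, a - b + c - d,
      a - b - c + d] * hadamard4⁻¹ := by
  rw [inv_hadamard4]
  ext i j
  fin_cases i <;> fin_cases j <;>
    · simp [K3ST, hadamard4, mul_apply, vecMul_diagonal, Fin.sum_univ_four]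
      ring

lemma exp_K3ST_eq_K3ST {a b c d a' b' c' d' : ℝ}
    (h₀ : Real.exp (a + b + c + d) = a' + b' + c' + d')
    (h₁ : Real.exp (a + b - c - d) = a' + b' - c' - d')
    (h₂ : Real.exp (a - b + c - d) = a' - b' + c' - d')
    (h₃ : Real.exp (a - b - c + d) = a' - b' - c' + d') :
    NormedSpace.exp (K3ST a b c d) = K3ST a' b' c' d' := by
  rw [K3ST_eq_hadamard4_conj, K3ST_eq_hadamard4_conj a', exp_conj _ _ isUnit_hadamard4,
    exp_diagonal]
  congr
  ext i
  rw [Pi.coe_exp, ← Real.exp_eq_exp_ℝ]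
  fin_cases i
  exacts [h₀, h₁, h₂, h₃]

lemma Real.log_div_mul {x y z : ℝ} (hx : x ≠ 0) (hy : y ≠ 0) (hz : z ≠ 0) :
    Real.log (x / (y * z)) = Real.log x - Real.log y - Real.log z := by
  rw [Real.log_div hx (mul_ne_zero hy hz), Real.log_mul hy hz, sub_sub]

theorem stmt4 (pα pβ pγ : ℝ)
    (h₁ : 0 < 1 - 2 * (pα + pγ)) (h₂ : 0 < 1 - 2 * (pβ + pγ)) (h₃ : 0 < 1 - 2 * (pα + pβ)) :
    let x₁ : ℝ := 1 - 2 * (pα + pγ)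
    let x₂ : ℝ := 1 - 2 * (pβ + pγ)
    let x₃ : ℝ := 1 - 2 * (pα + pβ)
    let qα : ℝ := (1 / 4) * Real.log (x₂ / (x₁ * x₃))
    let qβ : ℝ := (1 / 4) * Real.log (x₁ / (x₂ * x₃))
    let qγ : ℝ := (1 / 4) * Real.log (x₃ / (x₁ * x₂))
    NormedSpace.exp (K3ST (-(qα + qβ + qγ)) qα qβ qγ) =
      K3ST (1 - pα - pβ - pγ) pα pβ pγ := by
  intro x₁ x₂ x₃ qα qβ qγ
  have hqα : qα = (Real.log x₂ - Real.log x₁ - Real.log x₃) / 4 := by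
    rw [← Real.log_div_mul h₂.ne' h₁.ne' h₃.ne']; ring
  have hqβ : qβ = (Real.log x₁ - Real.log x₂ - Real.log x₃) / 4 := by
    rw [← Real.log_div_mul h₁.ne' h₂.ne' h₃.ne']; ring
  have hqγ : qγ = (Real.log x₃ - Real.log x₁ - Real.log x₂) / 4 := by
    rw [← Real.log_div_mul h₃.ne' h₁.ne' h₂.ne']; ring
  refine exp_K3ST_eq_K3ST ?_ ?_ ?_ ?_
  · rw [show -(qα + qβ + qγ) + qα + qβ + qγ = 0 by ring, Real.exp_zero]
    ring
  · rw [show -(qα + qβ + qγ) + qα - qβ - qγ = Real.log x₂ by rw [hqα, hqβ, hqγ]; ring,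
      Real.exp_log h₂]
    ring
  · rw [show -(qα + qβ + qγ) - qα + qβ - qγ = Real.log x₁ by rw [hqα, hqβ, hqγ]; ring,
      Real.exp_log h₁]
    ring
  · rw [show -(qα + qβ + qγ) - qα - qβ + qγ = Real.log x₃ by rw [hqα, hqβ, hqγ]; ring,
      Real.exp_log h₃]
    ring
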